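/- Let d ≥ 1 be an integer, L > 0, μ > 0, ε′ ≥ 0, σ ≥ 0, K ≥ 0, K′ ≥ 0, Δ ≥ 0. Let f : ℝ^d → ℝ be L-smooth, bounded above with f* = sup f, and satisfy the (μ, ε′)-relaxed weak gradient domination condition. Define η_t = 2/(t+2) and γ_t = 6/(√(2μ)·(t+2)) for integers t ≥ 0. On a probability space, let (θ_t)_{t≥0}, (d_t)_{t≥0}, (g_t)_{t≥0} be square-integrable ℝ^d-valued random sequences such that, almost surely for all t ≥ 0: d_t ≠ 0, θ_{t+1} = θ_t + γ_t·d_t/‖d_t‖, and ‖g_t − ∇f(θ_t)‖ ≤ Δ. Assume the sequence V_t := E[‖d_t − g_t‖²] satisfies V_0 ≤ σ² and V_{t+1} ≤ (1 − η_{t+1})·V_t + 2σ²·η_{t+1}² + K·γ_t² + K′ for all t ≥ 0. Then there exists an absolute constant C > 0 (independent of all the above data) such that for every integer T ≥ 1: f* − E[f(θ_T)] ≤ (f* − E[f(θ_0)])/(T+1)² + C·( (σ/√μ + L/μ)/(T+1) + (σ/√μ + √K/μ)/(T+1)^{1/2} + (ε′ + Δ)/√μ + √(K′)·(T+1)^{1/2}/√μ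 ). -/

import Mathlib

open MeasureTheory

/-- The momentum parameter sequence `η_t = 2/(t+2)` of the N-HARPG analysis. -/
noncomputable def etaNH (t : ℕ) : ℝ := 2 / ((t : ℝ) + 2)

/-- The step-size sequence `γ_t = 6/(√(2μ)(t+2))` of the N-HARPG analysis. -/
noncomputable def gammaNH (μ : ℝ) (t : ℕ) : ℝ := 6 / (Real.sqrt (2 * μ) * ((t : ℝ) + 2))

/-! With `c = √(2μ)`, smoothness and the relaxed gradient domination turn one normalized step
into `f* - f θ' ≤ (1 - cγ)(f* - f θ) + γ (ε' + 2Δ + 2‖d - g‖) + Lγ²`, and `c γ_t = 6/(t+2)`.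
In expectation `E‖d_t - g_t‖ ≤ √V_t`, and the variance recursion solves to
`V_t ≤ (9σ² + 36K/μ)/(t+2) + K'(t+2)`. Weighting the recursion for the gap `f* - E f(θ_t)` by
`(t+1)³`, which absorbs the contraction because `(t+2)³(1 - 6/(t+2)) = (t+2)²(t-4) ≤ (t+1)³`,
telescopes it to `(T+1)³ gap_T ≤ gap_0 + Σ_{t<T} (t+2)³ error_t`, and each weighted error is
`O((T+1)²)`. -/

open InnerProductSpace

section

variable {E : Type*} [NormedAddCommGroup E] [InnerProductSpace ℝ E]

theorem mul_norm_sub_two_mul_norm_sub_le_inner (x d : E) :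
    ‖d‖ * (‖x‖ - 2 * ‖d - x‖) ≤ ⟪x, d⟫_ℝ := by
  have hx : ‖x‖ ≤ ‖d‖ + ‖d - x‖ := by simpa using norm_sub_le d (d - x)
  have hdx := real_inner_le_norm (d - x) d
  rw [inner_sub_left, real_inner_self_eq_norm_sq] at hdx
  nlinarith [norm_nonneg d, real_inner_comm x d]

variable [CompleteSpace E] {f : E → ℝ} {L : ℝ}

theorem abs_sub_sub_inner_gradient_le (hL : 0 ≤ L) (hf : Differentiable ℝ f)
    (hLip : ∀ x y, ‖gradient f x - gradient f y‖ ≤ L * ‖x - y‖) (x y : E) :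
    |f y - f x - ⟪gradient f x, y - x⟫_ℝ| ≤ L * ‖y - x‖ ^ 2 := by
  have hfderiv : ∀ z, fderiv ℝ f z = toDual ℝ E (gradient f z) := fun z => by simp [gradient]
  have hmvt := (convex_closedBall x ‖y - x‖).norm_image_sub_le_of_norm_fderiv_le'
    (fun z _ => hf z) (φ := fderiv ℝ f x) (C := L * ‖y - x‖) (fun z hz => by
      rw [hfderiv, hfderiv, ← map_sub, LinearIsometryEquiv.norm_map]
      exact (hLip z x).trans (by gcongr; exact mem_closedBall_iff_norm.mp hz))
    (Metric.mem_closedBall_self (norm_nonneg _)) (mem_closedBall_iff_norm.mpr le_rfl)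
  rwa [hfderiv, toDual_apply_apply, Real.norm_eq_abs, mul_assoc, ← sq] at hmvt

theorem abs_le_quadratic_of_lipschitz_gradient (hL : 0 ≤ L) (hf : Differentiable ℝ f)
    (hLip : ∀ x y, ‖gradient f x - gradient f y‖ ≤ L * ‖x - y‖) (z : E) :
    |f z| ≤ |f 0| + ‖gradient f 0‖ * ‖z‖ + L * ‖z‖ ^ 2 := by
  have h := abs_sub_sub_inner_gradient_le hL hf hLip 0 z
  rw [sub_zero] at h
  calc |f z| = |f 0 + ⟪gradient f 0, z⟫_ℝ + (f z - f 0 - ⟪gradient f 0, z⟫_ℝ)| := by ring_nf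
    _ ≤ |f 0| + |⟪gradient f 0, z⟫_ℝ| + |f z - f 0 - ⟪gradient f 0, z⟫_ℝ| := abs_add_three _ _ _
    _ ≤ _ := by gcongr; exact abs_real_inner_le_norm _ _

theorem integrable_comp_of_lipschitz_gradient {Ω : Type*} [MeasurableSpace Ω] {P : Measure Ω}
    [IsFiniteMeasure P] (hL : 0 ≤ L) (hf : Differentiable ℝ f)
    (hLip : ∀ x y, ‖gradient f x - gradient f y‖ ≤ L * ‖x - y‖) {X : Ω → E} (hX : MemLp X 2 P) :
    Integrable (fun ω => f (X ω)) P := by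
  refine Integrable.mono' (g := fun ω => |f 0| + ‖gradient f 0‖ * ‖X ω‖ + L * ‖X ω‖ ^ 2) ?_
    (hf.continuous.comp_aestronglyMeasurable hX.aestronglyMeasurable)
    (.of_forall fun ω => abs_le_quadratic_of_lipschitz_gradient hL hf hLip (X ω))
  exact ((integrable_const _).add ((hX.integrable one_le_two).norm.const_mul _)).add
    (hX.norm.integrable_sq.const_mul _)

theorem sub_le_of_normalized_step {c ε' fstar γ : ℝ} (hL : 0 ≤ L) (hf : Differentiable ℝ f)
    (hLip : ∀ x y, ‖gradient f x - gradient f y‖ ≤ L * ‖x - y‖)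
    (hdom : ∀ x, ε' + ‖gradient f x‖ ≥ c * (fstar - f x)) {θ d : E} (hd : d ≠ 0) (hγ : 0 ≤ γ) :
    fstar - f (θ + (γ / ‖d‖) • d) ≤ (1 - c * γ) * (fstar - f θ)
      + γ * (ε' + 2 * ‖d - gradient f θ‖) + L * γ ^ 2 := by
  have hd' : 0 < ‖d‖ := norm_pos_iff.mpr hd
  have hlen : ‖(γ / ‖d‖) • d‖ = γ := by
    rw [norm_smul, Real.norm_of_nonneg (by positivity), div_mul_cancel₀ _ hd'.ne']
  have hdesc := (abs_le.mp (abs_sub_sub_inner_gradient_le hL hf hLip θ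
    (θ + (γ / ‖d‖) • d))).1
  rw [add_sub_cancel_left, hlen, real_inner_smul_right] at hdesc
  have hinner : γ * (‖gradient f θ‖ - 2 * ‖d - gradient f θ‖)
      ≤ γ / ‖d‖ * ⟪gradient f θ, d⟫_ℝ := by
    calc _ = γ / ‖d‖ * (‖d‖ * (‖gradient f θ‖ - 2 * ‖d - gradient f θ‖)) := by
          field_simp
      _ ≤ _ := by gcongr; exact mul_norm_sub_two_mul_norm_sub_le_inner _ _
  have hgrad : γ * (c * (fstar - f θ)) ≤ γ * (ε' + ‖gradient f θ‖) :=
    mul_le_mul_of_nonneg_left (hdom θ) hγ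
  linarith

variable {Ω : Type*} [MeasurableSpace Ω] {P : Measure Ω} [IsProbabilityMeasure P]

theorem integral_const_sub_of_integrable {X : Ω → ℝ} (hX : Integrable X P) (c : ℝ) :
    ∫ ω, (c - X ω) ∂P = c - ∫ ω, X ω ∂P := by
  rw [integral_sub (integrable_const c) hX, integral_const, probReal_univ, one_smul]

theorem integral_le_of_ae_le_affine {X Y Z : Ω → ℝ} (hX : Integrable X P) (hY : Integrable Y P)
    (hZ : Integrable Z P) {a b c : ℝ} (h : ∀ᵐ ω ∂P, X ω ≤ a * Y ω + b * Z ω + c) :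
    ∫ ω, X ω ∂P ≤ a * ∫ ω, Y ω ∂P + b * ∫ ω, Z ω ∂P + c := by
  have hYZ : Integrable (fun ω => a * Y ω + b * Z ω) P := (hY.const_mul a).add (hZ.const_mul b)
  calc ∫ ω, X ω ∂P ≤ ∫ ω, (a * Y ω + b * Z ω + c) ∂P :=
        integral_mono_ae hX (hYZ.add (integrable_const c)) h
    _ = _ := by
      rw [integral_add hYZ (integrable_const c), integral_add (hY.const_mul a) (hZ.const_mul b),
        integral_const_mul, integral_const_mul, integral_const, probReal_univ, one_smul]

theorem integral_le_of_integral_sq_le {X : Ω → ℝ} (hX : MemLp X 2 P) {y : ℝ} (hy : 0 ≤ y)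
    (h : ∫ ω, X ω ^ 2 ∂P ≤ y ^ 2) : ∫ ω, X ω ∂P ≤ y := by
  have hvar := ProbabilityTheory.variance_nonneg X P
  rw [ProbabilityTheory.variance_eq_sub hX] at hvar
  exact (abs_le_of_sq_le_sq' (by simp only [Pi.pow_apply] at hvar; linarith) hy).2

theorem sub_integral_le_of_normalized_step {c ε' Δ fstar γ : ℝ} (hL : 0 ≤ L)
    (hf : Differentiable ℝ f) (hLip : ∀ x y, ‖gradient f x - gradient f y‖ ≤ L * ‖x - y‖)
    (hdom : ∀ x, ε' + ‖gradient f x‖ ≥ c * (fstar - f x)) (hγ : 0 ≤ γ) {θ θ' d g : Ω → E}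
    (hfθ : Integrable (fun ω => f (θ ω)) P) (hfθ' : Integrable (fun ω => f (θ' ω)) P)
    (hdg : Integrable (fun ω => ‖d ω - g ω‖) P)
    (hstep : ∀ᵐ ω ∂P, d ω ≠ 0 ∧ θ' ω = θ ω + (γ / ‖d ω‖) • d ω ∧
      ‖g ω - gradient f (θ ω)‖ ≤ Δ) :
    fstar - ∫ ω, f (θ' ω) ∂P ≤ (1 - c * γ) * (fstar - ∫ ω, f (θ ω) ∂P)
      + 2 * γ * ∫ ω, ‖d ω - g ω‖ ∂P + (γ * (ε' + 2 * Δ) + L * γ ^ 2) := by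
  have hae : ∀ᵐ ω ∂P, fstar - f (θ' ω) ≤ (1 - c * γ) * (fstar - f (θ ω))
      + 2 * γ * ‖d ω - g ω‖ + (γ * (ε' + 2 * Δ) + L * γ ^ 2) := by
    filter_upwards [hstep] with ω ⟨hd, hθ', hbias⟩
    have hsplit : ‖d ω - gradient f (θ ω)‖ ≤ ‖d ω - g ω‖ + Δ :=
      (norm_sub_le_norm_sub_add_norm_sub _ _ _).trans (by gcongr)
    have := sub_le_of_normalized_step hL hf hLip hdom hd hγ (θ := θ ω)
    rw [← hθ'] at this
    nlinarith
  rw [← integral_const_sub_of_integrable hfθ', ← integral_const_sub_of_integrable hfθ]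
  exact integral_le_of_ae_le_affine ((integrable_const fstar).sub hfθ')
    ((integrable_const fstar).sub hfθ) hdg hae

end

theorem etaNH_succ (t : ℕ) : etaNH (t + 1) = 2 / ((t : ℝ) + 3) := by
  rw [etaNH]; push_cast; ring

theorem gammaNH_nonneg (μ : ℝ) (t : ℕ) : 0 ≤ gammaNH μ t := by
  unfold gammaNH; positivity

theorem sqrt_two_mul_mul_gammaNH {μ : ℝ} (hμ : 0 < μ) (t : ℕ) :
    Real.sqrt (2 * μ) * gammaNH μ t = 6 / ((t : ℝ) + 2) := by
  have : 0 < Real.sqrt (2 * μ) := by positivity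
  unfold gammaNH; field_simp

theorem gammaNH_sq {μ : ℝ} (hμ : 0 < μ) (t : ℕ) :
    gammaNH μ t ^ 2 = 18 / (μ * ((t : ℝ) + 2) ^ 2) := by
  rw [gammaNH, div_pow, mul_pow, Real.sq_sqrt (by positivity)]
  field_simp
  ring

theorem gammaNH_le {μ : ℝ} (hμ : 0 < μ) (t : ℕ) :
    gammaNH μ t ≤ 6 / (Real.sqrt μ * ((t : ℝ) + 2)) := by
  unfold gammaNH
  gcongr
  linarith

theorem variance_le_of_recursion {μ σ K K' : ℝ} (hμ : 0 < μ) (hK : 0 ≤ K) (hK' : 0 ≤ K')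
    {V : ℕ → ℝ} (hV0 : V 0 ≤ σ ^ 2)
    (hrec : ∀ t, V (t + 1) ≤ (1 - etaNH (t + 1)) * V t + 2 * σ ^ 2 * etaNH (t + 1) ^ 2
      + K * gammaNH μ t ^ 2 + K') (t : ℕ) :
    V t ≤ (9 * σ ^ 2 + 36 * (K / μ)) / ((t : ℝ) + 2) + K' * ((t : ℝ) + 2) := by
  have hk : 0 ≤ K / μ := by positivity
  induction t with
  | zero => norm_num; nlinarith [sq_nonneg σ]
  | succ n ih =>
    set x : ℝ := (n : ℝ) + 2
    have hx : 2 ≤ x := by simp [x]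
    have hη : 0 ≤ 1 - etaNH (n + 1) := by
      rw [etaNH_succ, sub_nonneg, div_le_one (by positivity)]; linarith
    have hslack : (9 * σ ^ 2 + 36 * (K / μ)) / (x + 1) + K' * (x + 1)
        - ((1 - 2 / (x + 1)) * ((9 * σ ^ 2 + 36 * (K / μ)) / x + K' * x)
          + 2 * σ ^ 2 * (2 / (x + 1)) ^ 2 + K * (18 / (μ * x ^ 2)) + K')
        = σ ^ 2 * (x + 9) / (x * (x + 1) ^ 2) + 18 * (K / μ) * (x - 1) / (x ^ 2 * (x + 1))
          + 2 * K' * x / (x + 1) := by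
      field_simp; ring
    have hx1 : 0 ≤ x - 1 := by linarith
    rw [show ((n + 1 : ℕ) : ℝ) + 2 = x + 1 by push_cast; ring]
    calc V (n + 1) ≤ (1 - etaNH (n + 1)) * V n + 2 * σ ^ 2 * etaNH (n + 1) ^ 2
          + K * gammaNH μ n ^ 2 + K' := hrec n
      _ ≤ (1 - etaNH (n + 1)) * ((9 * σ ^ 2 + 36 * (K / μ)) / x + K' * x)
          + 2 * σ ^ 2 * etaNH (n + 1) ^ 2 + K * gammaNH μ n ^ 2 + K' := by gcongr
      _ = (1 - 2 / (x + 1)) * ((9 * σ ^ 2 + 36 * (K / μ)) / x + K' * x)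
          + 2 * σ ^ 2 * (2 / (x + 1)) ^ 2 + K * (18 / (μ * x ^ 2)) + K' := by
        rw [etaNH_succ, gammaNH_sq hμ, show (n : ℝ) + 3 = x + 1 by ring]
      _ ≤ _ := by
        have : 0 ≤ σ ^ 2 * (x + 9) / (x * (x + 1) ^ 2)
            + 18 * (K / μ) * (x - 1) / (x ^ 2 * (x + 1)) + 2 * K' * x / (x + 1) := by
          positivity
        linarith

theorem add_div_add_mul_le_sq {σ K μ K' x : ℝ} (hσ : 0 ≤ σ) (hK : 0 ≤ K) (hμ : 0 < μ)
    (hK' : 0 ≤ K') (hx : 0 < x) :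
    (9 * σ ^ 2 + 36 * (K / μ)) / x + K' * x
      ≤ ((3 * σ + 6 * Real.sqrt K / Real.sqrt μ) / Real.sqrt x
        + Real.sqrt K' * Real.sqrt x) ^ 2 := by
  set a := 3 * σ + 6 * Real.sqrt K / Real.sqrt μ
  have hq : 0 ≤ Real.sqrt K / Real.sqrt μ := by positivity
  have hsq : 9 * σ ^ 2 + 36 * (K / μ) ≤ a ^ 2 := by
    have : (Real.sqrt K / Real.sqrt μ) ^ 2 = K / μ := by
      rw [div_pow, Real.sq_sqrt hK, Real.sq_sqrt hμ.le]
    have : a = 3 * σ + 6 * (Real.sqrt K / Real.sqrt μ) := by ring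
    nlinarith [mul_nonneg hσ hq]
  have hu : 0 < Real.sqrt x := Real.sqrt_pos.mpr hx
  have hexpand : (a / Real.sqrt x + Real.sqrt K' * Real.sqrt x) ^ 2
      = a ^ 2 / x + 2 * a * Real.sqrt K' + K' * x := by
    rw [add_sq, div_pow, mul_pow, Real.sq_sqrt hx.le, Real.sq_sqrt hK']
    field_simp
  have hcross : 0 ≤ 2 * a * Real.sqrt K' := by positivity
  rw [hexpand]
  have := div_le_div_of_nonneg_right hsq hx.le
  linarith

theorem cube_mul_le_of_recursion {G c : ℕ → ℝ} {M : ℝ} (hG : ∀ t, 0 ≤ G t)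
    (hrec : ∀ t, G (t + 1) ≤ (1 - 6 / ((t : ℝ) + 2)) * G t + c t) {T : ℕ}
    (hc : ∀ t < T, ((t : ℝ) + 2) ^ 3 * c t ≤ M) :
    ((T : ℝ) + 1) ^ 3 * G T ≤ G 0 + T * M := by
  induction T with
  | zero => simp
  | succ n ih =>
    have hcontract : ((n : ℝ) + 2) ^ 3 * (1 - 6 / ((n : ℝ) + 2)) ≤ ((n : ℝ) + 1) ^ 3 := by
      rw [show ((n : ℝ) + 2) ^ 3 * (1 - 6 / ((n : ℝ) + 2)) = ((n : ℝ) + 2) ^ 2 * ((n : ℝ) - 4) by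
        field_simp; ring]
      nlinarith [(n.cast_nonneg : (0 : ℝ) ≤ n)]
    have ih' := ih fun t ht => hc t (ht.trans n.lt_succ_self)
    calc ((((n + 1 : ℕ) : ℝ)) + 1) ^ 3 * G (n + 1)
        ≤ ((n : ℝ) + 2) ^ 3 * ((1 - 6 / ((n : ℝ) + 2)) * G n + c n) := by
          rw [show (((n + 1 : ℕ) : ℝ)) + 1 = (n : ℝ) + 2 by push_cast; ring]
          gcongr
          exact hrec n
      _ = ((n : ℝ) + 2) ^ 3 * (1 - 6 / ((n : ℝ) + 2)) * G n + ((n : ℝ) + 2) ^ 3 * c n := by ring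
      _ ≤ ((n : ℝ) + 1) ^ 3 * G n + M := by
          gcongr
          · exact hG n
          · exact hc n n.lt_succ_self
      _ ≤ G 0 + ((n + 1 : ℕ) : ℝ) * M := by push_cast; linarith

theorem cube_mul_step_error_le {μ L E A B W v : ℝ} (hμ : 0 < μ) (hL : 0 ≤ L) (hE : 0 ≤ E)
    (hA : 0 ≤ A) (hB : 0 ≤ B) {t : ℕ} (htv : (t : ℝ) + 2 ≤ v ^ 2) (hv : 0 ≤ v)
    (hW : W ≤ A / Real.sqrt ((t : ℝ) + 2) + B * Real.sqrt ((t : ℝ) + 2)) :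
    ((t : ℝ) + 2) ^ 3 * (2 * gammaNH μ t * W + (gammaNH μ t * E + L * gammaNH μ t ^ 2))
      ≤ 12 * (A * v ^ 3 + B * v ^ 5) / Real.sqrt μ + 6 * E * v ^ 4 / Real.sqrt μ
        + 18 * L * v ^ 2 / μ := by
  set u := Real.sqrt ((t : ℝ) + 2)
  have hu2 : u ^ 2 = (t : ℝ) + 2 := Real.sq_sqrt (by positivity)
  have hu : 0 < u := Real.sqrt_pos.mpr (by positivity)
  have huv : u ≤ v := by
    simpa [Real.sqrt_sq hv] using Real.sqrt_le_sqrt htv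
  have hγ := gammaNH_le hμ t
  have hγ2 := gammaNH_sq hμ t
  have hγ0 := gammaNH_nonneg μ t
  rw [← hu2] at hγ hγ2 ⊢
  calc (u ^ 2) ^ 3 * (2 * gammaNH μ t * W + (gammaNH μ t * E + L * gammaNH μ t ^ 2))
      ≤ (u ^ 2) ^ 3 * (2 * gammaNH μ t * (A / u + B * u)
          + (gammaNH μ t * E + L * gammaNH μ t ^ 2)) := by gcongr
    _ ≤ (u ^ 2) ^ 3 * (2 * (6 / (Real.sqrt μ * u ^ 2)) * (A / u + B * u)
          + (6 / (Real.sqrt μ * u ^ 2) * E + L * (18 / (μ * (u ^ 2) ^ 2)))) := by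
        rw [hγ2]; gcongr
    _ = 12 * (A * u ^ 3 + B * u ^ 5) / Real.sqrt μ + 6 * E * u ^ 4 / Real.sqrt μ
        + 18 * L * u ^ 2 / μ := by
        field_simp; ring
    _ ≤ _ := by gcongr

theorem le_of_nharpg_recursion {μ L ε' Δ σ K K' : ℝ} (hμ : 0 < μ) (hL : 0 ≤ L) (hε' : 0 ≤ ε')
    (hΔ : 0 ≤ Δ) (hσ : 0 ≤ σ) {G W : ℕ → ℝ} (hG : ∀ t, 0 ≤ G t)
    (hW : ∀ t : ℕ, W t ≤ (3 * σ + 6 * Real.sqrt K / Real.sqrt μ) / Real.sqrt ((t : ℝ) + 2)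
      + Real.sqrt K' * Real.sqrt ((t : ℝ) + 2))
    (hrec : ∀ t : ℕ, G (t + 1) ≤ (1 - 6 / ((t : ℝ) + 2)) * G t
      + (2 * gammaNH μ t * W t + (gammaNH μ t * (ε' + 2 * Δ) + L * gammaNH μ t ^ 2)))
    (T : ℕ) :
    G T ≤ G 0 / ((T : ℝ) + 1) ^ 2
      + 100 * ((σ / Real.sqrt μ + L / μ) / ((T : ℝ) + 1)
        + (σ / Real.sqrt μ + Real.sqrt K / μ) / Real.sqrt ((T : ℝ) + 1)
        + (ε' + Δ) / Real.sqrt μ + Real.sqrt K' * Real.sqrt ((T : ℝ) + 1) / Real.sqrt μ) := by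
  set p := Real.sqrt μ
  set q := Real.sqrt K
  set r := Real.sqrt K'
  set v := Real.sqrt ((T : ℝ) + 1)
  have hp : 0 < p := Real.sqrt_pos.mpr hμ
  have hμp : μ = p ^ 2 := (Real.sq_sqrt hμ.le).symm
  have hv2 : v ^ 2 = (T : ℝ) + 1 := Real.sq_sqrt (by positivity)
  have hv : 1 ≤ v := Real.one_le_sqrt.mpr (by simp)
  set A := 3 * σ + 6 * q / p
  set S := 12 * (A * v ^ 3 + r * v ^ 5) / p + 6 * (ε' + 2 * Δ) * v ^ 4 / p + 18 * L * v ^ 2 / μ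
  have hS : 0 ≤ S := by positivity
  have hcube := cube_mul_le_of_recursion hG hrec (T := T) (M := S) fun t ht =>
    cube_mul_step_error_le hμ hL (by positivity) (by positivity) (Real.sqrt_nonneg _)
      (by rw [hv2]; norm_cast; omega) (by positivity) (hW t)
  have hGT : G T ≤ G 0 / (v ^ 2) ^ 3 + S / (v ^ 2) ^ 2 := by
    have hTS : (T : ℝ) * S ≤ v ^ 2 * S := by rw [hv2]; linarith
    calc G T ≤ (G 0 + v ^ 2 * S) / (v ^ 2) ^ 3 := by
          rw [le_div_iff₀ (by positivity), mul_comm, hv2]; linarith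
      _ = _ := by field_simp
  have hG0 : G 0 / (v ^ 2) ^ 3 ≤ G 0 / (v ^ 2) ^ 2 :=
    div_le_div_of_nonneg_left (hG 0) (by positivity) (pow_le_pow_right₀ (by nlinarith) (by norm_num))
  have hremainder : 100 * ((σ / p + L / μ) / v ^ 2 + (σ / p + q / μ) / v + (ε' + Δ) / p
        + r * v / p) - S / (v ^ 2) ^ 2
      = 100 * σ / (p * v ^ 2) + 82 * L / (μ * v ^ 2) + 64 * σ / (p * v) + 28 * q / (μ * v)
        + (94 * ε' + 88 * Δ) / p + 88 * r * v / p := by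
    simp only [S, A]; rw [hμp]; field_simp; ring
  have : 0 ≤ 100 * σ / (p * v ^ 2) + 82 * L / (μ * v ^ 2) + 64 * σ / (p * v) + 28 * q / (μ * v)
      + (94 * ε' + 88 * Δ) / p + 88 * r * v / p := by positivity
  rw [← hv2]
  linarith

/-- global convergence of N-HARPG, abstract form. There is an absolute
constant `C > 0` such that: for any `L`-smooth `f` bounded above with supremum `fstar`
satisfying the `(μ, ε')`-relaxed weak gradient domination condition, and any square-integrable
random sequences `θ_t, d_t, g_t` following the normalized update
`θ_{t+1} = θ_t + γ_t d_t/‖d_t‖` with surrogate bias `‖g_t - ∇f(θ_t)‖ ≤ Δ` a.s., whose error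
variance `V_t = E‖d_t - g_t‖²` satisfies `V_0 ≤ σ²` and
`V_{t+1} ≤ (1 - η_{t+1}) V_t + 2σ² η_{t+1}² + K γ_t² + K'`, one has for every `T ≥ 1`,
`fstar - E f(θ_T) ≤ (fstar - E f(θ_0))/(T+1)²
  + C ((σ/√μ + L/μ)/(T+1) + (σ/√μ + √K/μ)/(T+1)^{1/2} + (ε' + Δ)/√μ + √K' (T+1)^{1/2}/√μ)`. -/
theorem stmt_16 :
    ∃ C > (0 : ℝ),
      ∀ (d : ℕ), 1 ≤ d →
      ∀ (L μ ε' σ K K' Δ : ℝ),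
        0 < L → 0 < μ → 0 ≤ ε' → 0 ≤ σ → 0 ≤ K → 0 ≤ K' → 0 ≤ Δ →
      ∀ (f : EuclideanSpace ℝ (Fin d) → ℝ),
        Differentiable ℝ f →
        (∀ x y, ‖gradient f x - gradient f y‖ ≤ L * ‖x - y‖) →
      ∀ (fstar : ℝ), IsLUB (Set.range f) fstar →
        (∀ x, ε' + ‖gradient f x‖ ≥ Real.sqrt (2 * μ) * (fstar - f x)) →
      ∀ (Ω : Type) [MeasurableSpace Ω] (P : Measure Ω) [IsProbabilityMeasure P]
        (θ dd g : ℕ → Ω → EuclideanSpace ℝ (Fin d)),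
        (∀ t, MemLp (θ t) 2 P) →
        (∀ t, MemLp (dd t) 2 P) →
        (∀ t, MemLp (g t) 2 P) →
        (∀ t : ℕ, ∀ᵐ ω ∂P, dd t ω ≠ 0 ∧
          θ (t + 1) ω = θ t ω + (gammaNH μ t / ‖dd t ω‖) • dd t ω ∧
          ‖g t ω - gradient f (θ t ω)‖ ≤ Δ) →
        (∫ ω, ‖dd 0 ω - g 0 ω‖ ^ 2 ∂P ≤ σ ^ 2) →
        (∀ t : ℕ, ∫ ω, ‖dd (t + 1) ω - g (t + 1) ω‖ ^ 2 ∂P ≤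
          (1 - etaNH (t + 1)) * ∫ ω, ‖dd t ω - g t ω‖ ^ 2 ∂P
            + 2 * σ ^ 2 * (etaNH (t + 1)) ^ 2 + K * (gammaNH μ t) ^ 2 + K') →
        ∀ T : ℕ, 1 ≤ T →
          fstar - ∫ ω, f (θ T ω) ∂P ≤
            (fstar - ∫ ω, f (θ 0 ω) ∂P) / ((T : ℝ) + 1) ^ 2
              + C * ((σ / Real.sqrt μ + L / μ) / ((T : ℝ) + 1)
                + (σ / Real.sqrt μ + Real.sqrt K / μ) / ((T : ℝ) + 1) ^ ((1 : ℝ) / 2)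
                + (ε' + Δ) / Real.sqrt μ
                + Real.sqrt K' * ((T : ℝ) + 1) ^ ((1 : ℝ) / 2) / Real.sqrt μ) := by
  refine ⟨100, by norm_num, ?_⟩
  intro d _ L μ ε' σ K K' Δ hL hμ hε' hσ hK hK' hΔ f hf hLip fstar hlub hdom
    Ω _ P _ θ dd g hθ hdd hg hstep hV0 hVrec T _
  have hfθ : ∀ t, Integrable (fun ω => f (θ t ω)) P := fun t =>
    integrable_comp_of_lipschitz_gradient hL.le hf hLip (hθ t)
  have hdg : ∀ t, MemLp (fun ω => ‖dd t ω - g t ω‖) 2 P := fun t => ((hdd t).sub (hg t)).norm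
  have hgap : ∀ t, 0 ≤ fstar - ∫ ω, f (θ t ω) ∂P := fun t => sub_nonneg.2 <| by
    simpa using integral_mono (hfθ t) (integrable_const fstar) fun ω =>
      hlub.1 (Set.mem_range_self (θ t ω))
  rw [← Real.sqrt_eq_rpow]
  refine le_of_nharpg_recursion (W := fun t => ∫ ω, ‖dd t ω - g t ω‖ ∂P) hμ hL.le hε' hΔ hσ hgap
    (fun t => ?_) (fun t => ?_) T
  · exact integral_le_of_integral_sq_le (hdg t) (by positivity)
      ((variance_le_of_recursion (V := fun t => ∫ ω, ‖dd t ω - g t ω‖ ^ 2 ∂P) hμ hK hK' hV0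
        hVrec t).trans (add_div_add_mul_le_sq hσ hK hμ hK' (by positivity)))
  · have h := sub_integral_le_of_normalized_step hL.le hf hLip hdom (gammaNH_nonneg μ t)
      (hfθ t) (hfθ (t + 1)) ((hdg t).integrable one_le_two) (hstep t)
    rw [sqrt_two_mul_mul_gammaNH hμ] at h
    linarith
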